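/- Let n ≥ 13 be an integer and λ > 1 a real number, and let {A_k} and {B_k}, k = 0,…,n−1, be the vertices of the 2-concentric parallel regular n-gons with inner side length 1 and aspect ratio λ. Then for every Steiner minimal tree (V, G) for the terminal set T = {A_0,…,A_{n−1}} ∪ {B_0,…,B_{n−1}}, there is no Steiner point S ∈ V \ T such that S lies in the topological interior of the convex hull of {A_0,…,A_{n−1}} and S is adjacent in G to some outer vertex B_l. -/

import Mathlib

open Real EuclideanGeometry
open scoped Classical

noncomputable section

abbrev Pt : Type := EuclideanSpace ℝ (Fin 2)

/-- A Steiner network for a finite set `P` of points in the plane: a finite set `V` of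
points containing `P`, together with a connected simple graph on `V`. -/
structure SteinerNetwork (P : Finset Pt) where
  V : Finset Pt
  terminals_subset : P ⊆ V
  G : SimpleGraph V
  connected : G.Connected

/-- The total Euclidean length of a graph on a finite set of points in the plane. -/
noncomputable def graphLength {W : Finset Pt} (H : SimpleGraph W) : ℝ := by
  classical
  exact ∑ e ∈ H.edgeFinset,
    Sym2.lift ⟨fun (u v : W) => dist (u : Pt) (v : Pt), fun _ _ => dist_comm _ _⟩ e

/-- The length of a Steiner network. -/
noncomputable def SteinerNetwork.length {P : Finset Pt} (N : SteinerNetwork P) : ℝ :=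
  graphLength N.G

/-- The Steiner minimal length of a finite set of points in the plane. -/
noncomputable def steinerMinLength (P : Finset Pt) : ℝ :=
  sInf (Set.range fun N : SteinerNetwork P => N.length)

/-- A Steiner minimal tree for `P`: a Steiner network of minimal length which is
acyclic and in which every Steiner point (vertex not in `P`) has degree at least 3. -/
def IsSMT {P : Finset Pt} (N : SteinerNetwork P) : Prop :=
  N.length = steinerMinLength P ∧ N.G.IsAcyclic ∧
    ∀ v : N.V, (v : Pt) ∉ P → 3 ≤ (N.G.neighborSet v).ncard

/-- Vertex `A_k` of the inner regular `n`-gon of side length `1`. -/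
noncomputable def Apt (n : ℕ) (k : ℕ) : Pt :=
  (1 / (2 * Real.sin (π / n))) •
    (WithLp.toLp 2 ![Real.cos (2 * π * k / n), Real.sin (2 * π * k / n)] : Pt)

/-- Vertex `B_k = λ • A_k` of the outer regular `n`-gon of side length `λ`. -/
noncomputable def Bpt (n : ℕ) (lam : ℝ) (k : ℕ) : Pt := lam • Apt n k

/-- The terminal set: vertices of the 2-concentric parallel regular `n`-gons. -/
noncomputable def terminals (n : ℕ) (lam : ℝ) : Finset Pt :=
  (Finset.range n).image (Apt n) ∪ (Finset.range n).image (Bpt n lam)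

/-!
Let `R` be the circumradius of the inner polygon, so that a point `S` of the interior of its
convex hull has `‖S‖ < R`. If such an `S` were joined to `B_l = λ A_l`, then `S B_l` would be the
strictly longest side of the triangle `S A_l B_l`: `|A_l B_l| = (λ - 1) R < λ R - ‖S‖ ≤ |S B_l|`,
and `|S A_l| < |S B_l|` since `⟪S, A_l⟫ < R²`. This is impossible in a network of minimal length:
after deleting an edge `S w`, every vertex `a` is still connected to `S` or to `w`, so adding the
edge `a w` or `S a` yields a network again, whence `|S w| ≤ max |S a| |a w|`.
-/

namespace SimpleGraph

variable {V : Type*} {G : SimpleGraph V} {u w : V}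

lemma Walk.reachable_deleteEdges_or {v x : V} (p : G.Walk v x) :
    (G.deleteEdges {s(u, w)}).Reachable v x ∨ (G.deleteEdges {s(u, w)}).Reachable v u ∨
      (G.deleteEdges {s(u, w)}).Reachable v w := by
  induction p with
  | nil => exact Or.inl .rfl
  | @cons a b c hab p ih =>
    by_cases he : s(a, b) = s(u, w)
    · rcases Sym2.eq_iff.mp he with ⟨rfl, -⟩ | ⟨rfl, -⟩
      · exact Or.inr (Or.inl .rfl)
      · exact Or.inr (Or.inr .rfl)
    · have hab' : (G.deleteEdges {s(u, w)}).Adj a b := (deleteEdges_adj ..).2 ⟨hab, he⟩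
      exact ih.imp hab'.reachable.trans (Or.imp hab'.reachable.trans hab'.reachable.trans)

lemma Preconnected.reachable_deleteEdges_or (hG : G.Preconnected) (v : V) :
    (G.deleteEdges {s(u, w)}).Reachable v u ∨ (G.deleteEdges {s(u, w)}).Reachable v w := by
  obtain ⟨p⟩ := hG v u
  rcases p.reachable_deleteEdges_or (u := u) (w := w) with h | h | h
  exacts [Or.inl h, Or.inl h, Or.inr h]

lemma Connected.deleteEdges_sup_edge (hG : G.Connected) {x y : V}
    (hx : (G.deleteEdges {s(u, w)}).Reachable x u) (hy : (G.deleteEdges {s(u, w)}).Reachable y w) :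
    (G.deleteEdges {s(u, w)} ⊔ edge x y).Connected := by
  have hle : G.deleteEdges {s(u, w)} ≤ G.deleteEdges {s(u, w)} ⊔ edge x y := le_sup_left
  have hxy : (G.deleteEdges {s(u, w)} ⊔ edge x y).Reachable x y := by
    by_cases h : x = y
    · exact h ▸ .rfl
    · exact Adj.reachable (Or.inr ((edge_adj x y x y).2 ⟨Or.inl ⟨rfl, rfl⟩, h⟩))
  have hwu := ((hy.symm.mono hle).trans hxy.symm).trans (hx.mono hle)
  have hu : ∀ v, (G.deleteEdges {s(u, w)} ⊔ edge x y).Reachable v u := fun v =>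
    (hG.preconnected.reachable_deleteEdges_or v).elim (·.mono hle)
      fun h => (h.mono hle).trans hwu
  have := hG.nonempty
  exact ⟨fun a b => (hu a).trans (hu b).symm⟩

end SimpleGraph

section graphLength

variable {W : Finset Pt}

def edgeLength : Sym2 W → ℝ :=
  Sym2.lift ⟨fun (u v : W) => dist (u : Pt) (v : Pt), fun _ _ => dist_comm _ _⟩

@[simp]
lemma edgeLength_mk (u v : W) : edgeLength s(u, v) = dist (u : Pt) (v : Pt) := rfl

lemma edgeLength_nonneg (e : Sym2 W) : 0 ≤ edgeLength e := by
  induction e using Sym2.ind with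
  | _ u v => exact (dist_nonneg : 0 ≤ dist (u : Pt) (v : Pt))

variable (H : SimpleGraph W)

lemma graphLength_eq_sum [Fintype H.edgeSet] :
    graphLength H = ∑ e ∈ H.edgeFinset, edgeLength e :=
  Finset.sum_congr (by ext; simp) fun _ _ => rfl

lemma graphLength_nonneg : 0 ≤ graphLength H := by
  rw [graphLength_eq_sum]
  exact Finset.sum_nonneg fun e _ => edgeLength_nonneg e

lemma graphLength_deleteEdges_sup_edge_le {e : Sym2 W} (he : e ∈ H.edgeSet) (x y : W) :
    graphLength (H.deleteEdges {e} ⊔ SimpleGraph.edge x y) ≤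
      graphLength H - edgeLength e + dist (x : Pt) (y : Pt) := by
  have hsub : (H.deleteEdges {e} ⊔ SimpleGraph.edge x y).edgeFinset ⊆
      insert s(x, y) (H.edgeFinset.erase e) := by
    intro f
    simp only [SimpleGraph.mem_edgeFinset, SimpleGraph.edgeSet_sup,
      SimpleGraph.edgeSet_deleteEdges, SimpleGraph.edgeSet_edge, Finset.mem_insert,
      Finset.mem_erase]
    grind
  have hinsert : ∑ f ∈ insert s(x, y) (H.edgeFinset.erase e), edgeLength f ≤
      dist (x : Pt) (y : Pt) + ∑ f ∈ H.edgeFinset.erase e, edgeLength f := by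
    by_cases hmem : s(x, y) ∈ H.edgeFinset.erase e
    · rw [Finset.insert_eq_of_mem hmem]
      linarith [dist_nonneg (x := (x : Pt)) (y := y)]
    · rw [Finset.sum_insert hmem, edgeLength_mk]
  rw [graphLength_eq_sum, graphLength_eq_sum,
    ← Finset.sum_erase_add _ _ (H.mem_edgeFinset.2 he)]
  linarith [Finset.sum_le_sum_of_subset_of_nonneg hsub fun f _ _ => edgeLength_nonneg f]

end graphLength

namespace SteinerNetwork

variable {P : Finset Pt} (N : SteinerNetwork P)

lemma steinerMinLength_le_length : steinerMinLength P ≤ N.length :=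
  csInf_le ⟨0, by rintro _ ⟨M, rfl⟩; exact graphLength_nonneg M.G⟩ ⟨N, rfl⟩

lemma dist_le_of_reachable_deleteEdges (hmin : N.length = steinerMinLength P) {S w x y : N.V}
    (hSw : N.G.Adj S w) (hx : (N.G.deleteEdges {s(S, w)}).Reachable x S)
    (hy : (N.G.deleteEdges {s(S, w)}).Reachable y w) :
    dist (S : Pt) (w : Pt) ≤ dist (x : Pt) (y : Pt) := by
  let N' : SteinerNetwork P :=
    ⟨N.V, N.terminals_subset, _, N.connected.deleteEdges_sup_edge hx hy⟩
  have hle := graphLength_deleteEdges_sup_edge_le N.G (N.G.mem_edgeSet.2 hSw) x y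
  have hmin' := N'.steinerMinLength_le_length
  simp only [SteinerNetwork.length, edgeLength_mk] at hmin hmin' hle
  linarith

lemma dist_le_max_of_adj (hmin : N.length = steinerMinLength P) {S w : N.V} (hSw : N.G.Adj S w)
    (a : N.V) :
    dist (S : Pt) (w : Pt) ≤ max (dist (S : Pt) (a : Pt)) (dist (a : Pt) (w : Pt)) := by
  rcases N.connected.preconnected.reachable_deleteEdges_or (u := S) (w := w) a with h | h
  · exact (N.dist_le_of_reachable_deleteEdges hmin hSw h .rfl).trans (le_max_right _ _)
  · exact (N.dist_le_of_reachable_deleteEdges hmin hSw .rfl h).trans (le_max_left _ _)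

end SteinerNetwork

section Geometry

variable {E : Type*} [NormedAddCommGroup E] [InnerProductSpace ℝ E] {S A : E} {lam : ℝ}

lemma dist_lt_dist_smul_of_norm_lt (hlam : 1 < lam) (hS : ‖S‖ < ‖A‖) :
    dist S A < dist S (lam • A) := by
  have hinner : inner ℝ S A < ‖A‖ ^ 2 :=
    (real_inner_le_norm S A).trans_lt (by nlinarith [norm_nonneg S])
  have hsq : dist S A ^ 2 < dist S (lam • A) ^ 2 := by
    rw [dist_eq_norm, dist_eq_norm, norm_sub_sq_real, norm_sub_sq_real, real_inner_smul_right,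
      norm_smul, Real.norm_eq_abs, abs_of_pos (by linarith), mul_pow]
    nlinarith [mul_lt_mul_of_pos_left hinner (sub_pos.2 hlam),
      mul_nonneg (sq_nonneg (lam - 1)) (sq_nonneg ‖A‖)]
  exact lt_of_pow_lt_pow_left₀ 2 dist_nonneg hsq

lemma dist_self_smul_lt_dist_smul_of_norm_lt (hlam : 1 < lam) (hS : ‖S‖ < ‖A‖) :
    dist A (lam • A) < dist S (lam • A) := by
  have hA : dist A (lam • A) = (lam - 1) * ‖A‖ := by
    rw [dist_comm, dist_eq_norm, show lam • A - A = (lam - 1) • A by rw [sub_smul, one_smul],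
      norm_smul, Real.norm_eq_abs, abs_of_pos (by linarith)]
  have hSA : lam * ‖A‖ - ‖S‖ ≤ dist S (lam • A) := by
    rw [dist_comm, dist_eq_norm]
    have := norm_sub_norm_le (lam • A) S
    rwa [norm_smul, Real.norm_eq_abs, abs_of_pos (by linarith)] at this
  linarith

lemma max_dist_lt_dist_smul_of_norm_lt (hlam : 1 < lam) (hS : ‖S‖ < ‖A‖) :
    max (dist S A) (dist A (lam • A)) < dist S (lam • A) :=
  max_lt (dist_lt_dist_smul_of_norm_lt hlam hS) (dist_self_smul_lt_dist_smul_of_norm_lt hlam hS)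

end Geometry

lemma norm_lt_of_mem_interior_convexHull {E : Type*} [NormedAddCommGroup E] [NormedSpace ℝ E]
    [Nontrivial E] {s : Set E} {r : ℝ} (hs : ∀ x ∈ s, ‖x‖ ≤ r) {y : E}
    (hy : y ∈ interior (convexHull ℝ s)) : ‖y‖ < r := by
  have hsub : convexHull ℝ s ⊆ Metric.closedBall 0 r :=
    convexHull_min (fun x hx => mem_closedBall_zero_iff.2 (hs x hx)) (convex_closedBall 0 r)
  have := interior_mono hsub hy
  rwa [interior_closedBall', mem_ball_zero_iff] at this

lemma norm_Apt (n k : ℕ) : ‖Apt n k‖ = |1 / (2 * Real.sin (π / n))| := by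
  rw [Apt, norm_smul, Real.norm_eq_abs, EuclideanSpace.norm_eq, Fin.sum_univ_two]
  simp

theorem no_inner_steiner_point_adjacent_to_outer_general (n : ℕ)
    (lam : ℝ) (hlam : 1 < lam)
    (N : SteinerNetwork (terminals n lam)) (hN : IsSMT N) :
    ¬ ∃ (S w : N.V) (l : ℕ), (S : Pt) ∉ terminals n lam ∧
      (S : Pt) ∈ interior (convexHull ℝ (↑((Finset.range n).image (Apt n)) : Set Pt)) ∧
      l < n ∧ (w : Pt) = Bpt n lam l ∧ N.G.Adj S w := by
  rintro ⟨S, w, l, -, hSint, hl, hw, hSw⟩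
  have hA : Apt n l ∈ N.V := N.terminals_subset <|
    Finset.mem_union_left _ (Finset.mem_image_of_mem _ (Finset.mem_range.2 hl))
  have hS : ‖(S : Pt)‖ < ‖Apt n l‖ := by
    refine norm_lt_of_mem_interior_convexHull (fun x hx => ?_) hSint
    obtain ⟨k, -, rfl⟩ := Finset.mem_image.1 hx
    rw [norm_Apt, norm_Apt]
  have hmax := N.dist_le_max_of_adj hN.1 hSw ⟨Apt n l, hA⟩
  rw [hw, Bpt] at hmax
  exact (max_dist_lt_dist_smul_of_norm_lt hlam hS).not_ge hmax

/-- For `n ≥ 13` and `λ > 1`, in any Steiner minimal tree for the vertices of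
2-concentric parallel regular `n`-gons, no Steiner point lying in the interior of
the convex hull of the inner polygon is adjacent to an outer vertex `B_l`. -/
theorem no_inner_steiner_point_adjacent_to_outer (n : ℕ) (hn : 13 ≤ n)
    (lam : ℝ) (hlam : 1 < lam)
    (N : SteinerNetwork (terminals n lam)) (hN : IsSMT N) :
    ¬ ∃ (S w : N.V) (l : ℕ), (S : Pt) ∉ terminals n lam ∧
      (S : Pt) ∈ interior (convexHull ℝ (↑((Finset.range n).image (Apt n)) : Set Pt)) ∧
      l < n ∧ (w : Pt) = Bpt n lam l ∧ N.G.Adj S w :=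
  no_inner_steiner_point_adjacent_to_outer_general n lam hlam N hN

end
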